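/- arXiv:1207.5899 — 4 statements merged into one kernel-verified Lean document; each statement's English description precedes it below -/
import Mathlib

section
/- Let u, v : ℝ → ℝ be càdlàg functions of locally bounded variation such that lim_{x→∞} u(x)v(x) = c₊ and lim_{x→−∞} u(x)v(x) = c₋ for real constants c₊, c₋. If ∫ |v(x−)| |du|(x) < ∞ and ∫ |u(x)| |dv|(x) < ∞, then the integration-by-parts formula ∫ u(x) dv(x) = c₊ − c₋ − ∫ v(x−) du(x) holds, where all integrals are over (−∞, ∞). -/
/-!
On `(a, b]` the formula is Fubini for `df ⊗ dg` on the square `(a, b]²`, cut along the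
diagonal: the slices of `{x ≤ y}` are `(a, y]`, of mass `f y - f a`, and those of `{y < x}` are
the open intervals `(a, x)`, of mass `g(x-) - g a` — this is where the left limit comes from. The
whole square has mass `(f b - f a)(g b - g a)`. The formula is bilinear, so it passes to
differences of Stieltjes functions, and on `(-t, t]` with `t → ∞` the integrals converge by
integrability while the boundary term tends to `cp - cm`.
-/

open MeasureTheory Filter Set Function

section ProdMeasure

variable {α β : Type*} [MeasurableSpace α] [MeasurableSpace β]
  {μ : Measure α} {ν : Measure β} {s : Set (α × β)}

theorem measureReal_prod_apply [IsFiniteMeasure ν] (hs : MeasurableSet s) :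
    (μ.prod ν).real s = ∫ x, ν.real (Prod.mk x ⁻¹' s) ∂μ := by
  rw [measureReal_def, Measure.prod_apply hs, ← integral_toReal
    (measurable_measure_prodMk_left hs).aemeasurable (ae_of_all _ fun _ => measure_lt_top ν _)]
  rfl

theorem measureReal_prod_apply_symm [IsFiniteMeasure μ] [SFinite ν] (hs : MeasurableSet s) :
    (μ.prod ν).real s = ∫ y, μ.real ((fun x => (x, y)) ⁻¹' s) ∂ν := by
  rw [measureReal_def, Measure.prod_apply_symm hs, ← integral_toReal
    (measurable_measure_prodMk_right hs).aemeasurable (ae_of_all _ fun _ => measure_lt_top μ _)]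
  rfl

end ProdMeasure

theorem Monotone.integrableOn_Ioc {μ : Measure ℝ} [IsLocallyFiniteMeasure μ] {φ : ℝ → ℝ}
    (hφ : Monotone φ) (a b : ℝ) : IntegrableOn φ (Ioc a b) μ :=
  ((hφ.monotoneOn _).integrableOn_isCompact isCompact_Icc).mono_set Ioc_subset_Icc_self

theorem tendsto_setIntegral_Ioc_neg_self {μ : Measure ℝ} {φ : ℝ → ℝ} (hφ : Integrable φ μ) :
    Tendsto (fun t => ∫ x in Ioc (-t) t, φ x ∂μ) atTop (nhds (∫ x, φ x ∂μ)) := by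
  refine (intervalIntegral_tendsto_integral hφ tendsto_neg_atTop_atBot tendsto_id).congr' ?_
  filter_upwards [eventually_ge_atTop 0] with t ht
  exact intervalIntegral.integral_of_le (neg_le_self ht)

namespace StieltjesFunction

variable (f g : StieltjesFunction ℝ) {a b : ℝ}

instance isFiniteMeasure_restrict_Ioc : IsFiniteMeasure (f.measure.restrict (Ioc a b)) :=
  isFiniteMeasure_restrict.2 measure_Ioc_lt_top.ne

theorem measureReal_Ioc (hab : a ≤ b) : f.measure.real (Ioc a b) = f b - f a := by
  rw [measureReal_def, measure_Ioc, ENNReal.toReal_ofReal (sub_nonneg.2 (f.mono hab))]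

theorem measureReal_Ioo (hab : a < b) : f.measure.real (Ioo a b) = leftLim f b - f a := by
  rw [measureReal_def, measure_Ioo, ENNReal.toReal_ofReal (sub_nonneg.2 (f.mono.le_leftLim hab))]

theorem leftLim_sub (x : ℝ) :
    leftLim (fun t => f t - g t) x = leftLim f x - leftLim g x :=
  leftLim_eq_of_tendsto (f.mono.tendsto_leftLim x |>.sub (g.mono.tendsto_leftLim x))

theorem setIntegral_Ioc_add_setIntegral_Ioc_leftLim (hab : a ≤ b) :
    (∫ x in Ioc a b, f x ∂g.measure) + (∫ x in Ioc a b, leftLim g x ∂f.measure) =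
      f b * g b - f a * g a := by
  set s := Ioc a b
  set π := (f.measure.restrict s).prod (g.measure.restrict s)
  have hT : MeasurableSet {p : ℝ × ℝ | p.1 ≤ p.2} :=
    measurableSet_le measurable_fst measurable_snd
  have mass_le : π.real {p | p.1 ≤ p.2} = ∫ y in s, (f y - f a) ∂g.measure := by
    rw [measureReal_prod_apply_symm hT]
    refine setIntegral_congr_fun measurableSet_Ioc fun y hy => ?_
    have hIic : Iic y ∩ s = Ioc a y := by rw [inter_comm, Ioc_inter_Iic, inf_eq_right.2 hy.2]
    change (f.measure.restrict s).real (Iic y) = _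
    rw [measureReal_restrict_apply measurableSet_Iic, hIic, measureReal_Ioc _ hy.1.le]
  have mass_gt : π.real {p | p.1 ≤ p.2}ᶜ = ∫ x in s, (leftLim g x - g a) ∂f.measure := by
    rw [measureReal_prod_apply hT.compl]
    refine setIntegral_congr_fun measurableSet_Ioc fun x hx => ?_
    have hIio : Iio x ∩ s = Ioo a x := by
      ext y; simp only [mem_inter_iff, mem_Iio, mem_Ioc, mem_Ioo, s]
      exact ⟨fun h => ⟨h.2.1, h.1⟩, fun h => ⟨h.2, h.1, h.2.le.trans hx.2⟩⟩
    have slice : Prod.mk x ⁻¹' {p : ℝ × ℝ | p.1 ≤ p.2}ᶜ = Iio x := by ext; simp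
    rw [slice, measureReal_restrict_apply measurableSet_Iio, hIio, measureReal_Ioo _ hx.1]
  have mass_total :
      π.real {p | p.1 ≤ p.2} + π.real {p | p.1 ≤ p.2}ᶜ = (f b - f a) * (g b - g a) := by
    rw [measureReal_add_measureReal_compl hT, ← univ_prod_univ, measureReal_prod_prod,
      measureReal_restrict_apply_univ, measureReal_restrict_apply_univ, measureReal_Ioc f hab,
      measureReal_Ioc g hab]
  rw [mass_le, mass_gt, integral_sub (f.mono.integrableOn_Ioc a b) (integrable_const _),
    integral_sub (g.mono.leftLim.integrableOn_Ioc a b) (integrable_const _), setIntegral_const,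
    setIntegral_const, measureReal_Ioc f hab, measureReal_Ioc g hab, smul_eq_mul,
    smul_eq_mul] at mass_total
  linear_combination mass_total

theorem setIntegral_Ioc_sub_add_setIntegral_Ioc_leftLim_sub (u₁ u₂ v₁ v₂ : StieltjesFunction ℝ)
    (hab : a ≤ b) :
    ((∫ x in Ioc a b, (u₁ x - u₂ x) ∂v₁.measure) - ∫ x in Ioc a b, (u₁ x - u₂ x) ∂v₂.measure) +
      ((∫ x in Ioc a b, leftLim (fun t => v₁ t - v₂ t) x ∂u₁.measure) -
        ∫ x in Ioc a b, leftLim (fun t => v₁ t - v₂ t) x ∂u₂.measure) =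
      (u₁ b - u₂ b) * (v₁ b - v₂ b) - (u₁ a - u₂ a) * (v₁ a - v₂ a) := by
  simp only [leftLim_sub]
  rw [integral_sub (u₁.mono.integrableOn_Ioc a b) (u₂.mono.integrableOn_Ioc a b),
    integral_sub (u₁.mono.integrableOn_Ioc a b) (u₂.mono.integrableOn_Ioc a b),
    integral_sub (v₁.mono.leftLim.integrableOn_Ioc a b) (v₂.mono.leftLim.integrableOn_Ioc a b),
    integral_sub (v₁.mono.leftLim.integrableOn_Ioc a b) (v₂.mono.leftLim.integrableOn_Ioc a b)]
  linear_combination setIntegral_Ioc_add_setIntegral_Ioc_leftLim u₁ v₁ hab -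
    setIntegral_Ioc_add_setIntegral_Ioc_leftLim u₁ v₂ hab -
    setIntegral_Ioc_add_setIntegral_Ioc_leftLim u₂ v₁ hab +
    setIntegral_Ioc_add_setIntegral_Ioc_leftLim u₂ v₂ hab

end StieltjesFunction

/-- **Integration by parts on the whole real line for càdlàg functions of locally
bounded variation.**
A càdlàg function of locally bounded variation is represented as the difference of two
nondecreasing right-continuous functions (its Jordan decomposition), i.e. of two
Stieltjes functions; the induced signed Lebesgue–Stieltjes measure is the difference of
the corresponding Stieltjes measures and the total variation measure is their sum.
If `u = u₁ - u₂`, `v = v₁ - v₂` with `u₁,u₂,v₁,v₂` Stieltjes functions,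
`u(x)v(x) → cp` as `x → ∞`, `u(x)v(x) → cm` as `x → -∞`,
`∫ |v(x-)| |du|(x) < ∞` and `∫ |u(x)| |dv|(x) < ∞`, then
`∫ u dv = cp - cm - ∫ v(x-) du(x)`. -/
theorem integration_by_parts_real_line
    (u₁ u₂ v₁ v₂ : StieltjesFunction ℝ) (cp cm : ℝ)
    (u : ℝ → ℝ) (hu : u = fun x => u₁ x - u₂ x)
    (v : ℝ → ℝ) (hv : v = fun x => v₁ x - v₂ x)
    (htop : Tendsto (fun x => u x * v x) atTop (nhds cp))
    (hbot : Tendsto (fun x => u x * v x) atBot (nhds cm))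
    (hvu : Integrable (fun x => Function.leftLim v x) (u₁.measure + u₂.measure))
    (huv : Integrable u (v₁.measure + v₂.measure)) :
    (∫ x, u x ∂v₁.measure) - (∫ x, u x ∂v₂.measure) =
      cp - cm - ((∫ x, Function.leftLim v x ∂u₁.measure) -
        (∫ x, Function.leftLim v x ∂u₂.measure)) := by
  subst hu hv
  obtain ⟨huv₁, huv₂⟩ := integrable_add_measure.1 huv
  obtain ⟨hvu₁, hvu₂⟩ := integrable_add_measure.1 hvu
  have integrals := ((tendsto_setIntegral_Ioc_neg_self huv₁).sub
    (tendsto_setIntegral_Ioc_neg_self huv₂)).add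
    ((tendsto_setIntegral_Ioc_neg_self hvu₁).sub (tendsto_setIntegral_Ioc_neg_self hvu₂))
  have boundary := htop.sub (hbot.comp tendsto_neg_atTop_atBot)
  have parts : ∀ᶠ t in atTop, _ := (eventually_ge_atTop (0 : ℝ)).mono fun t ht =>
    StieltjesFunction.setIntegral_Ioc_sub_add_setIntegral_Ioc_leftLim_sub u₁ u₂ v₁ v₂
      (neg_le_self ht)
  have := tendsto_nhds_unique (integrals.congr' parts) boundary
  linarith
end

section
/- Let λ > λ' ≥ 0, let φ_μ(x) := (1+|x|)^μ, and let ψ : ℝ → ℝ be a càdlàg function with sup_x |ψ(x)| φ_{λ'}(x)^{-1} < ∞ (i.e., ψ ∈ D_{−λ'}). Suppose f, f₁, f₂, … are nondecreasing càdlàg functions on ℝ with total variation bounded by 1 such that sup_x |(f_n − f)(x)| φ_λ(x) → 0 as n → ∞, and such that ∫ φ_{λ'}(x) df(x) < ∞ and ∫ φ_{λ'}(x) df_n(x) < ∞ for all n. Then the integrals ∫ ψ(x) df(x) and ∫ ψ(x) df_n(x) exist, and ∫ ψ(x) df_n(x) → ∫ ψ(x) df(x) as n → ∞. -/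
/-!
Split `∫ ψ d(fₙ - f)` at `[-A, A)`. On `[-A, A)` the càdlàg function `ψ` is within `δ` of a step
function with finitely many steps `[s, s')`, and the `fₙ`- and `f`-masses of such an interval,
`leftLim fₙ s' - leftLim fₙ s`, differ by at most `2 sup |fₙ - f|`. On the tails `|ψ| ≤ C φ_λ'`;
on the dyadic shell `2ᵏ A ≤ |x| < 2ᵏ⁺¹ A` the weight `φ_λ'` varies by a factor at most `2 ^ λ'`,
while the two masses of the shell differ by `O(ε (2ᵏ A) ^ (-λ))` when `|fₙ - f| φ_λ ≤ ε`. Summing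
over the shells, `∫_{|x| ≥ A} φ_λ' dfₙ ≤ 2 ^ λ' ∫_{|x| ≥ A} φ_λ' df + O(ε)` because `λ' < λ`.
So one first takes `A` with a small `f`-tail, then `δ`, then `n` large.
-/

open MeasureTheory Filter Set Function
open scoped ENNReal Topology

theorem measurable_of_continuousWithinAt_Ici {β : Type*} [TopologicalSpace β]
    [TopologicalSpace.PseudoMetrizableSpace β] [MeasurableSpace β] [BorelSpace β] {ψ : ℝ → β}
    (hψ : ∀ x, ContinuousWithinAt ψ (Ici x) x) : Measurable ψ := by
  -- `ψ` is the pointwise limit of `x ↦ ψ (⌈m x⌉ / m)`, each of which factors through `ℤ`.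
  refine measurable_of_tendsto_metrizable (f := fun (m : ℕ) x => ψ (⌈(m + 1 : ℝ) * x⌉ / (m + 1)))
    (fun m => (measurable_from_top (f := fun k : ℤ => ψ (k / (m + 1)))).comp
      (Int.measurable_ceil.comp (measurable_const_mul _)))
    (tendsto_pi_nhds.2 fun x => (hψ x).tendsto.comp ?_)
  have hpos (m : ℕ) : (0 : ℝ) < m + 1 := by positivity
  have hge (m : ℕ) : x ≤ ⌈(m + 1 : ℝ) * x⌉ / (m + 1) := by
    rw [le_div_iff₀ (hpos m), mul_comm]; exact Int.le_ceil _
  have hlt (m : ℕ) : ⌈(m + 1 : ℝ) * x⌉ / (m + 1) ≤ x + 1 / (m + 1) := by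
    calc _ ≤ ((m + 1) * x + 1) / (m + 1) := by gcongr; exact (Int.ceil_lt_add_one _).le
      _ = x + 1 / (m + 1) := by field_simp
  refine tendsto_nhdsWithin_iff.2 ⟨?_, Eventually.of_forall hge⟩
  refine tendsto_of_tendsto_of_tendsto_of_le_of_le tendsto_const_nhds ?_ hge hlt
  simpa using tendsto_const_nhds.add (tendsto_one_div_add_atTop_nhds_zero_nat (𝕜 := ℝ))

/-- On `[a, t)`, `ψ` is within `δ` of a step function with `n` steps, each taking the value of `ψ`
at the left end of its interval. -/
def ApproxByStep (ψ : ℝ → ℝ) (δ a : ℝ) : ℕ → ℝ → Prop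
  | 0, t => t = a
  | n + 1, t => ∃ s, ApproxByStep ψ δ a n s ∧ s ≤ t ∧ ∀ x ∈ Ico s t, |ψ x - ψ s| ≤ δ

theorem ApproxByStep.start_le {ψ : ℝ → ℝ} {δ a : ℝ} :
    ∀ {n : ℕ} {t : ℝ}, ApproxByStep ψ δ a n t → a ≤ t
  | 0, _, h => h.ge
  | _ + 1, _, ⟨_, hs, hst, _⟩ => hs.start_le.trans hst

theorem exists_approxByStep {ψ : ℝ → ℝ} (hrc : ∀ x, ContinuousWithinAt ψ (Ici x) x)
    (hll : ∀ x, ∃ l, Tendsto ψ (𝓝[<] x) (𝓝 l)) {δ : ℝ} (hδ : 0 < δ) {a b : ℝ} (hab : a ≤ b) :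
    ∃ n, ApproxByStep ψ δ a n b := by
  set S := {t ∈ Icc a b | ∃ n, ApproxByStep ψ δ a n t}
  have haS : a ∈ S := ⟨⟨le_rfl, hab⟩, 0, rfl⟩
  have hbdd : BddAbove S := ⟨b, fun t ht => ht.1.2⟩
  set c := sSup S
  have hac : a ≤ c := le_csSup hbdd haS
  have hcb : c ≤ b := csSup_le ⟨a, haS⟩ fun t ht => ht.1.2
  -- Near `c` from the left, `ψ` is within `δ / 2` of its left limit, so one more step reaches `c`.
  have hcS : c ∈ S := by
    rcases hac.eq_or_lt with hac | hac
    · exact hac ▸ haS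
    obtain ⟨l, hl⟩ := hll c
    obtain ⟨r, hrc, hr⟩ := mem_nhdsLT_iff_exists_Ioo_subset.1
      (hl (Metric.closedBall_mem_nhds l (half_pos hδ)))
    obtain ⟨t, htS, hrt⟩ := exists_lt_of_lt_csSup ⟨a, haS⟩ (max_lt hrc hac)
    obtain ⟨n, ht⟩ := htS.2
    refine ⟨⟨hac.le, hcb⟩, n + 1, t, ht, le_csSup hbdd htS, fun x hx => ?_⟩
    have hnear : ∀ y ∈ Ico t c, dist (ψ y) l ≤ δ / 2 := fun y hy =>
      hr ⟨(le_max_left r a).trans_lt (hrt.trans_le hy.1), hy.2⟩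
    calc |ψ x - ψ t| = dist (ψ x) (ψ t) := rfl
      _ ≤ dist (ψ x) l + dist (ψ t) l := dist_triangle_right _ _ _
      _ ≤ δ / 2 + δ / 2 := add_le_add (hnear x hx) (hnear t ⟨le_rfl, hx.1.trans_lt hx.2⟩)
      _ = δ := add_halves δ
  obtain ⟨n, hc⟩ := hcS.2
  refine ⟨n, hcb.eq_or_lt.elim (· ▸ hc) fun hcb => ?_⟩
  -- Otherwise right-continuity at `c` lets the partition go one step beyond `c`.
  obtain ⟨u, hcu, hu⟩ := mem_nhdsGE_iff_exists_Ico_subset.1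
    ((hrc c) (Metric.closedBall_mem_nhds (ψ c) hδ))
  have hmem : min b u ∈ S := ⟨⟨hac.trans (le_min hcb.le hcu.le), min_le_left _ _⟩, n + 1, c, hc,
    le_min hcb.le hcu.le, fun x hx => hu ⟨hx.1, hx.2.trans_le (min_le_right _ _)⟩⟩
  exact absurd (le_csSup hbdd hmem) (not_le.2 (lt_min hcb hcu))

theorem abs_setIntegral_sub_setIntegral_le {X : Type*} [MeasurableSpace X] {μ ν : Measure X}
    {s : Set X} {ψ : X → ℝ} {c δ : ℝ} (hμs : μ s < ∞) (hνs : ν s < ∞)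
    (hμ : IntegrableOn ψ s μ) (hν : IntegrableOn ψ s ν) (hc : ∀ x ∈ s, |ψ x - c| ≤ δ) :
    |∫ x in s, ψ x ∂ν - ∫ x in s, ψ x ∂μ| ≤
      δ * (ν.real s + μ.real s) + |c| * |ν.real s - μ.real s| := by
  have hsplit {ρ : Measure X} (hρs : ρ s < ∞) (hρ : IntegrableOn ψ s ρ) :
      ∫ x in s, ψ x ∂ρ = ∫ x in s, (ψ x - c) ∂ρ + c * ρ.real s := by
    rw [integral_sub hρ (integrableOn_const hρs.ne), setIntegral_const, smul_eq_mul]; ring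
  have hosc {ρ : Measure X} (hρs : ρ s < ∞) : |∫ x in s, (ψ x - c) ∂ρ| ≤ δ * ρ.real s :=
    norm_setIntegral_le_of_norm_le_const (f := fun x => ψ x - c) hρs hc
  rw [hsplit hνs hν, hsplit hμs hμ]
  calc _ = |(∫ x in s, (ψ x - c) ∂ν - ∫ x in s, (ψ x - c) ∂μ) + c * (ν.real s - μ.real s)| := by
        congr 1; ring
    _ ≤ |∫ x in s, (ψ x - c) ∂ν| + |∫ x in s, (ψ x - c) ∂μ| + |c| * |ν.real s - μ.real s| := by
        rw [← abs_mul]; exact (abs_add_le _ _).trans (add_le_add_left (abs_sub _ _) _)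
    _ ≤ _ := by linarith [hosc hνs, hosc hμs]

theorem abs_setIntegral_le_mul_setIntegral {X : Type*} [MeasurableSpace X] {μ : Measure X}
    {ψ w : X → ℝ} {C : ℝ} (hw : Integrable w μ) (hψ : ∀ x, |ψ x| ≤ C * w x) (s : Set X) :
    |∫ x in s, ψ x ∂μ| ≤ C * ∫ x in s, w x ∂μ := by
  rw [← integral_const_mul, ← Real.norm_eq_abs]
  exact norm_integral_le_of_norm_le (hw.const_mul C).restrict (ae_of_all _ hψ)

theorem ApproxByStep.abs_setIntegral_Ico_sub_le {μ ν : Measure ℝ} [IsLocallyFiniteMeasure μ]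
    [IsLocallyFiniteMeasure ν] {ψ : ℝ → ℝ} {δ a b M η : ℝ} (hμ : Integrable ψ μ)
    (hν : Integrable ψ ν) (hM : ∀ x ∈ Icc a b, |ψ x| ≤ M)
    (hη : ∀ s t, s ≤ t → |ν.real (Ico s t) - μ.real (Ico s t)| ≤ η) :
    ∀ {n : ℕ} {t : ℝ}, ApproxByStep ψ δ a n t → t ≤ b →
      |∫ x in Ico a t, ψ x ∂ν - ∫ x in Ico a t, ψ x ∂μ| ≤
        n * (M * η) + δ * (ν.real (Ico a t) + μ.real (Ico a t))
  | 0, t, rfl, _ => by simp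
  | n + 1, t, ⟨s, hs, hst, hosc⟩, htb => by
    have hprev := hs.abs_setIntegral_Ico_sub_le hμ hν hM hη (hst.trans htb)
    have hcell := abs_setIntegral_sub_setIntegral_le measure_Ico_lt_top measure_Ico_lt_top
      hμ.integrableOn hν.integrableOn hosc
    have hψs : |ψ s| * |ν.real (Ico s t) - μ.real (Ico s t)| ≤ M * η :=
      mul_le_mul (hM s ⟨hs.start_le, hst.trans htb⟩) (hη s t hst) (abs_nonneg _)
        ((abs_nonneg _).trans (hM s ⟨hs.start_le, hst.trans htb⟩))
    have hdisj := Ico_disjoint_Ico_same (a := a) (b := s) (c := t)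
    rw [← Ico_union_Ico_eq_Ico hs.start_le hst, setIntegral_union hdisj measurableSet_Ico
      hμ.integrableOn hμ.integrableOn, setIntegral_union hdisj measurableSet_Ico
      hν.integrableOn hν.integrableOn,
      measureReal_union hdisj measurableSet_Ico measure_Ico_lt_top.ne measure_Ico_lt_top.ne,
      measureReal_union hdisj measurableSet_Ico measure_Ico_lt_top.ne measure_Ico_lt_top.ne]
    calc _ = |(∫ x in Ico a s, ψ x ∂ν - ∫ x in Ico a s, ψ x ∂μ) +
          (∫ x in Ico s t, ψ x ∂ν - ∫ x in Ico s t, ψ x ∂μ)| := by congr 1; ring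
      _ ≤ _ := (abs_add_le _ _).trans (by push_cast; linarith)

theorem Monotone.abs_leftLim_sub_leftLim_le {f g b : ℝ → ℝ} (hf : Monotone f) (hg : Monotone g)
    (h : ∀ x, |g x - f x| ≤ b x) {t : ℝ} (hb : ContinuousWithinAt b (Iio t) t) :
    |leftLim g t - leftLim f t| ≤ b t :=
  le_of_tendsto_of_tendsto' ((hg.tendsto_leftLim t).sub (hf.tendsto_leftLim t)).abs hb h

theorem StieltjesFunction.measureReal_Ico (f : StieltjesFunction ℝ) {s t : ℝ} (hst : s ≤ t) :
    f.measure.real (Ico s t) = leftLim f t - leftLim f s := by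
  rw [measureReal_def, measure_Ico, ENNReal.toReal_ofReal (sub_nonneg.2 (f.mono.leftLim hst))]

theorem StieltjesFunction.abs_measureReal_Ico_sub_le {f g : StieltjesFunction ℝ} {b : ℝ → ℝ}
    (hb : Continuous b) (h : ∀ x, |g x - f x| ≤ b x) {s t : ℝ} (hst : s ≤ t) :
    |g.measure.real (Ico s t) - f.measure.real (Ico s t)| ≤ b s + b t := by
  rw [g.measureReal_Ico hst, f.measureReal_Ico hst]
  have hs := f.mono.abs_leftLim_sub_leftLim_le g.mono h hb.continuousAt.continuousWithinAt (t := s)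
  have ht := f.mono.abs_leftLim_sub_leftLim_le g.mono h hb.continuousAt.continuousWithinAt (t := t)
  calc _ = |(leftLim g t - leftLim f t) - (leftLim g s - leftLim f s)| := by congr 1; ring
    _ ≤ _ := (abs_sub _ _).trans (by linarith)

theorem continuous_one_add_abs_rpow (p : ℝ) : Continuous fun x : ℝ => (1 + |x|) ^ p :=
  (continuous_const.add continuous_abs).rpow_const fun x => Or.inl (by positivity : 0 < 1 + |x|).ne'

theorem mul_one_add_abs_rpow_le_iff {a c x p : ℝ} :
    a * (1 + |x|) ^ p ≤ c ↔ a ≤ c * (1 + |x|) ^ (-p) := by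
  rw [Real.rpow_neg (by positivity), ← div_eq_mul_inv, le_div_iff₀ (by positivity)]

theorem StieltjesFunction.abs_measureReal_Ico_sub_le_two_mul {f g : StieltjesFunction ℝ}
    {lam ε s t : ℝ} (hlam : 0 ≤ lam) (hclose : ∀ x, |g x - f x| ≤ ε * (1 + |x|) ^ (-lam))
    (hst : s ≤ t) : |g.measure.real (Ico s t) - f.measure.real (Ico s t)| ≤ 2 * ε := by
  have hε : 0 ≤ ε := by simpa using (abs_nonneg _).trans (hclose 0)
  have hw (x : ℝ) : ε * (1 + |x|) ^ (-lam) ≤ ε := mul_le_of_le_one_right hε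
    (Real.rpow_le_one_of_one_le_of_nonpos (by linarith [abs_nonneg x]) (by linarith))
  linarith [abs_measureReal_Ico_sub_le ((continuous_one_add_abs_rpow (-lam)).const_mul ε)
    hclose hst, hw s, hw t]

theorem one_add_two_mul_rpow_le {r p : ℝ} (hr : 0 ≤ r) (hp : 0 ≤ p) :
    (1 + 2 * r) ^ p ≤ 2 ^ p * (1 + r) ^ p := by
  rw [← Real.mul_rpow zero_le_two (by positivity)]
  exact Real.rpow_le_rpow (by positivity) (by linarith) hp

theorem one_add_two_mul_rpow_mul_rpow_neg_le {r p q : ℝ} {k : ℕ} (hk : 2 ^ k ≤ r) (hp : 0 ≤ p)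
    (hpq : p ≤ q) : (1 + 2 * r) ^ p * (1 + r) ^ (-q) ≤ 2 ^ p * (2 ^ (p - q)) ^ k := by
  have hr : 0 ≤ r := (by positivity : (0 : ℝ) ≤ 2 ^ k).trans hk
  calc _ ≤ 2 ^ p * (1 + r) ^ p * (1 + r) ^ (-q) := by
        gcongr; exact one_add_two_mul_rpow_le hr hp
    _ = 2 ^ p * (1 + r) ^ (p - q) := by rw [sub_eq_add_neg, Real.rpow_add (by linarith)]; ring
    _ ≤ 2 ^ p * ((2 : ℝ) ^ k) ^ (p - q) := mul_le_mul_of_nonneg_left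
        (Real.rpow_le_rpow_of_nonpos (by positivity) (by linarith) (by linarith)) (by positivity)
    _ = _ := by
        rw [← Real.rpow_natCast_mul zero_le_two, mul_comm (k : ℝ),
          Real.rpow_mul_natCast zero_le_two]

theorem tsum_ofReal_le_of_le_geometric {a : ℕ → ℝ} {c ρ : ℝ} (hc : 0 ≤ c) (hρ₀ : 0 ≤ ρ)
    (hρ₁ : ρ < 1) (h : ∀ k, a k ≤ c * ρ ^ k) :
    ∑' k, ENNReal.ofReal (a k) ≤ ENNReal.ofReal (c * (1 - ρ)⁻¹) := by
  have hsum := (hasSum_geometric_of_lt_one hρ₀ hρ₁).mul_left c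
  calc _ ≤ ∑' k, ENNReal.ofReal (c * ρ ^ k) :=
        ENNReal.tsum_le_tsum fun k => ENNReal.ofReal_le_ofReal (h k)
    _ = _ := by
        rw [← ENNReal.ofReal_tsum_of_nonneg (fun k => by positivity) hsum.summable, hsum.tsum_eq]

theorem Monotone.iUnion_succ_sdiff {α : Type*} {R : ℕ → Set α} (hR : Monotone R) :
    ⋃ k, R (k + 1) \ R k = (⋃ k, R k) \ R 0 := by
  ext x
  simp only [mem_iUnion, Set.mem_sdiff]
  refine ⟨fun ⟨k, hk, hk'⟩ => ⟨⟨k + 1, hk⟩, fun h0 => hk' (hR k.zero_le h0)⟩, ?_⟩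
  rintro ⟨⟨j, hj⟩, h0⟩
  induction j with
  | zero => exact absurd hj h0
  | succ j ih => by_cases h : x ∈ R j; exacts [ih h, ⟨j, hj, h⟩]

theorem Monotone.pairwise_disjoint_on_succ_sdiff {α : Type*} {R : ℕ → Set α} (hR : Monotone R) :
    Pairwise (Disjoint on fun k => R (k + 1) \ R k) := by
  simpa only [← hR.disjointed_add_one] using
    (disjoint_disjointed R).comp_of_injective (add_left_injective 1)

theorem monotone_Ico_neg_two_pow_mul {A : ℝ} (hA : 0 ≤ A) :
    Monotone fun k : ℕ => Ico (-(2 ^ k * A)) (2 ^ k * A) := fun i j hij =>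
  have : (2 : ℝ) ^ i * A ≤ 2 ^ j * A := by gcongr; exact one_le_two
  Ico_subset_Ico (neg_le_neg this) this

theorem iUnion_Ico_two_pow_sdiff {A : ℝ} (hA : 0 < A) :
    ⋃ k : ℕ, Ico (-(2 ^ (k + 1) * A)) (2 ^ (k + 1) * A) \ Ico (-(2 ^ k * A)) (2 ^ k * A) =
      (Ico (-A) A)ᶜ := by
  have hR := monotone_Ico_neg_two_pow_mul hA.le
  have hunion : ⋃ k : ℕ, Ico (-(2 ^ k * A)) (2 ^ k * A) = univ := eq_univ_of_forall fun x => by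
    obtain ⟨k, hk⟩ := pow_unbounded_of_one_lt (|x| / A) one_lt_two
    rw [div_lt_iff₀ hA] at hk
    exact mem_iUnion.2 ⟨k, by linarith [neg_abs_le x], by linarith [le_abs_self x]⟩
  rw [hR.iUnion_succ_sdiff, hunion]
  simp [compl_eq_univ_sdiff]

theorem abs_mem_Icc_of_mem_Ico_sdiff {x r r' : ℝ} (hx : x ∈ Ico (-r') r' \ Ico (-r) r) :
    |x| ∈ Icc r r' :=
  ⟨not_lt.1 fun h => hx.2 ⟨by linarith [neg_abs_le x], by linarith [le_abs_self x]⟩,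
    abs_le.2 ⟨hx.1.1, hx.1.2.le⟩⟩

theorem lintegral_iUnion_le_of_blocks {X : Type*} [MeasurableSpace X] {μ ν : Measure X}
    {g : X → ℝ≥0∞} (hg : Measurable g) {B : ℕ → Set X} (hB : ∀ k, MeasurableSet (B k))
    (hdisj : Pairwise (Disjoint on B)) {K : ℝ≥0∞} {w e : ℕ → ℝ≥0∞}
    (hgw : ∀ k, ∀ x ∈ B k, g x ≤ w k) (hwg : ∀ k, ∀ x ∈ B k, w k ≤ K * g x)
    (hνμ : ∀ k, ν (B k) ≤ μ (B k) + e k) :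
    ∫⁻ x in ⋃ k, B k, g x ∂ν ≤ K * ∫⁻ x in ⋃ k, B k, g x ∂μ + ∑' k, w k * e k := by
  rw [lintegral_iUnion hB hdisj, lintegral_iUnion hB hdisj, ← ENNReal.tsum_mul_left,
    ← ENNReal.tsum_add]
  refine ENNReal.tsum_le_tsum fun k => ?_
  calc ∫⁻ x in B k, g x ∂ν ≤ ∫⁻ _ in B k, w k ∂ν := setLIntegral_mono' (hB k) (hgw k)
    _ = w k * ν (B k) := setLIntegral_const _ _
    _ ≤ w k * μ (B k) + w k * e k := by rw [← mul_add]; gcongr; exact hνμ k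
    _ = ∫⁻ _ in B k, w k ∂μ + w k * e k := by rw [setLIntegral_const]
    _ ≤ ∫⁻ x in B k, K * g x ∂μ + w k * e k := by
        gcongr ?_ + _; exact setLIntegral_mono' (hB k) (hwg k)
    _ = K * ∫⁻ x in B k, g x ∂μ + w k * e k := by rw [lintegral_const_mul _ hg]

theorem StieltjesFunction.measure_Ico_sdiff_le {f g : StieltjesFunction ℝ} {lam ε r r' : ℝ}
    (hlam : 0 ≤ lam) (hr : 0 ≤ r) (hrr' : r ≤ r')
    (hclose : ∀ x, |g x - f x| ≤ ε * (1 + |x|) ^ (-lam)) :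
    g.measure (Ico (-r') r' \ Ico (-r) r) ≤
      f.measure (Ico (-r') r' \ Ico (-r) r) + ENNReal.ofReal (4 * ε * (1 + r) ^ (-lam)) := by
  have hε : 0 ≤ ε := by simpa using (abs_nonneg _).trans (hclose 0)
  have hΔ {s : ℝ} (hs : r ≤ s) :
      |g.measure.real (Ico (-s) s) - f.measure.real (Ico (-s) s)| ≤ 2 * ε * (1 + r) ^ (-lam) := by
    refine (abs_measureReal_Ico_sub_le ((continuous_one_add_abs_rpow (-lam)).const_mul ε)
      hclose (by linarith)).trans ?_
    have : (1 + s) ^ (-lam) ≤ (1 + r) ^ (-lam) :=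
      Real.rpow_le_rpow_of_nonpos (by positivity) (by linarith) (neg_nonpos.2 hlam)
    rw [abs_neg, abs_of_nonneg (hr.trans hs)]
    nlinarith
  have hsub : Ico (-r) r ⊆ Ico (-r') r' := Ico_subset_Ico (neg_le_neg hrr') hrr'
  have hreal : g.measure.real (Ico (-r') r' \ Ico (-r) r) ≤
      f.measure.real (Ico (-r') r' \ Ico (-r) r) + 4 * ε * (1 + r) ^ (-lam) := by
    rw [measureReal_sdiff hsub measurableSet_Ico measure_Ico_lt_top.ne,
      measureReal_sdiff hsub measurableSet_Ico measure_Ico_lt_top.ne]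
    linarith [abs_le.1 (hΔ hrr'), abs_le.1 (hΔ le_rfl)]
  have hfin (μ : Measure ℝ) [IsLocallyFiniteMeasure μ] : μ (Ico (-r') r' \ Ico (-r) r) ≠ ∞ :=
    (measure_mono sdiff_subset).trans_lt measure_Ico_lt_top |>.ne
  rw [← ofReal_measureReal (hfin g.measure), ← ofReal_measureReal (hfin f.measure)]
  exact (ENNReal.ofReal_le_ofReal hreal).trans ENNReal.ofReal_add_le

theorem StieltjesFunction.lintegral_compl_Ico_le {f g : StieltjesFunction ℝ} {lam lam' ε A : ℝ}
    (hlam : lam' < lam) (hlam' : 0 ≤ lam') (hA : 1 ≤ A)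
    (hclose : ∀ x, |g x - f x| ≤ ε * (1 + |x|) ^ (-lam)) :
    ∫⁻ x in (Ico (-A) A)ᶜ, ENNReal.ofReal ((1 + |x|) ^ lam') ∂g.measure ≤
      ENNReal.ofReal (2 ^ lam') *
          ∫⁻ x in (Ico (-A) A)ᶜ, ENNReal.ofReal ((1 + |x|) ^ lam') ∂f.measure
        + ENNReal.ofReal (4 * 2 ^ lam' * ε * (1 - 2 ^ (lam' - lam))⁻¹) := by
  have hε : 0 ≤ ε := by simpa using (abs_nonneg _).trans (hclose 0)
  have hr (k : ℕ) : (2 : ℝ) ^ k ≤ 2 ^ k * A := le_mul_of_one_le_right (by positivity) hA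
  have hr₀ (k : ℕ) : (0 : ℝ) ≤ 2 ^ k * A := by positivity
  have hr_succ (k : ℕ) : (2 : ℝ) ^ (k + 1) * A = 2 * (2 ^ k * A) := by rw [pow_succ]; ring
  rw [← iUnion_Ico_two_pow_sdiff (by linarith)]
  refine (lintegral_iUnion_le_of_blocks (g := fun x => ENNReal.ofReal ((1 + |x|) ^ lam'))
    (B := fun k => Ico (-(2 ^ (k + 1) * A)) (2 ^ (k + 1) * A) \ Ico (-(2 ^ k * A)) (2 ^ k * A))
    (continuous_one_add_abs_rpow lam').measurable.ennreal_ofReal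
    (fun k => measurableSet_Ico.diff measurableSet_Ico)
    (monotone_Ico_neg_two_pow_mul (by linarith)).pairwise_disjoint_on_succ_sdiff
    (K := ENNReal.ofReal (2 ^ lam'))
    (w := fun k => ENNReal.ofReal ((1 + 2 ^ (k + 1) * A) ^ lam'))
    (e := fun k => ENNReal.ofReal (4 * ε * (1 + 2 ^ k * A) ^ (-lam))) (fun k x hx => ?_)
    (fun k x hx => ?_) fun k => StieltjesFunction.measure_Ico_sdiff_le (hlam'.trans hlam.le)
      (hr₀ k) (by linarith [hr₀ k, hr_succ k]) hclose).trans (add_le_add le_rfl ?_)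
  · exact ENNReal.ofReal_le_ofReal (Real.rpow_le_rpow (by positivity)
      (by linarith [(abs_mem_Icc_of_mem_Ico_sdiff hx).2]) hlam')
  · rw [← ENNReal.ofReal_mul (by positivity), hr_succ]
    refine ENNReal.ofReal_le_ofReal ((one_add_two_mul_rpow_le (hr₀ k) hlam').trans ?_)
    gcongr
    exact (abs_mem_Icc_of_mem_Ico_sdiff hx).1
  · rw [tsum_congr fun k => (ENNReal.ofReal_mul (by positivity)).symm]
    refine tsum_ofReal_le_of_le_geometric (by positivity) (by positivity)
      (Real.rpow_lt_one_of_one_lt_of_neg one_lt_two (by linarith)) fun k => ?_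
    rw [hr_succ]
    calc _ = 4 * ε * ((1 + 2 * (2 ^ k * A)) ^ lam' * (1 + 2 ^ k * A) ^ (-lam)) := by ring
      _ ≤ 4 * ε * (2 ^ lam' * (2 ^ (lam' - lam)) ^ k) := mul_le_mul_of_nonneg_left
          (one_add_two_mul_rpow_mul_rpow_neg_le (hr k) hlam' hlam.le) (by positivity)
      _ = _ := by ring

theorem StieltjesFunction.setIntegral_compl_Ico_le {f g : StieltjesFunction ℝ} {lam lam' ε A : ℝ}
    (hlam : lam' < lam) (hlam' : 0 ≤ lam') (hA : 1 ≤ A)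
    (hclose : ∀ x, |g x - f x| ≤ ε * (1 + |x|) ^ (-lam))
    (hf : Integrable (fun x => (1 + |x|) ^ lam') f.measure) :
    ∫ x in (Ico (-A) A)ᶜ, (1 + |x|) ^ lam' ∂g.measure ≤
      2 ^ lam' * ∫ x in (Ico (-A) A)ᶜ, (1 + |x|) ^ lam' ∂f.measure
        + 4 * 2 ^ lam' * ε * (1 - 2 ^ (lam' - lam))⁻¹ := by
  have hε : 0 ≤ ε := by simpa using (abs_nonneg _).trans (hclose 0)
  have hE : 0 ≤ (1 - (2 : ℝ) ^ (lam' - lam))⁻¹ := inv_nonneg.2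
    (sub_nonneg.2 (Real.rpow_le_one_of_one_le_of_nonpos one_le_two (by linarith)))
  have hpos (x : ℝ) : 0 ≤ (1 + |x|) ^ lam' := by positivity
  have hT : 0 ≤ ∫ x in (Ico (-A) A)ᶜ, (1 + |x|) ^ lam' ∂f.measure :=
    setIntegral_nonneg measurableSet_Ico.compl fun x _ => hpos x
  rw [integral_eq_lintegral_of_nonneg_ae (ae_of_all _ hpos)
    (continuous_one_add_abs_rpow lam').aestronglyMeasurable]
  refine ENNReal.toReal_le_of_le_ofReal (by positivity) ?_
  rw [ENNReal.ofReal_add (by positivity) (by positivity), ENNReal.ofReal_mul (by positivity),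
    ofReal_integral_eq_lintegral_ofReal hf.restrict (ae_of_all _ hpos)]
  exact StieltjesFunction.lintegral_compl_Ico_le hlam hlam' hA hclose

theorem tendsto_setIntegral_compl_Ico_atTop {μ : Measure ℝ} {g : ℝ → ℝ} (hg : Integrable g μ) :
    Tendsto (fun A => ∫ x in (Ico (-A) A)ᶜ, g x ∂μ) atTop (𝓝 0) := by
  have hmono : Monotone fun A : ℝ => Ico (-A) A := fun A B h => Ico_subset_Ico (neg_le_neg h) h
  have hunion : ⋃ A : ℝ, Ico (-A) A = univ := eq_univ_of_forall fun x =>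
    mem_iUnion.2 ⟨|x| + 1, by linarith [neg_abs_le x], by linarith [le_abs_self x]⟩
  have := tendsto_setIntegral_of_monotone (fun A => measurableSet_Ico) hmono
    (by rw [hunion]; exact hg.integrableOn)
  rw [hunion, setIntegral_univ] at this
  have hcompl (A : ℝ) : ∫ x in (Ico (-A) A)ᶜ, g x ∂μ = ∫ x, g x ∂μ - ∫ x in Ico (-A) A, g x ∂μ := by
    rw [← integral_add_compl measurableSet_Ico hg]; ring
  simpa [hcompl] using (tendsto_const_nhds (x := ∫ x, g x ∂μ)).sub this

theorem abs_integral_sub_le_of_approxByStep {ψ : ℝ → ℝ} {f g : StieltjesFunction ℝ}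
    {lam lam' C A δ ε : ℝ} {n : ℕ} (hlam : lam' < lam) (hlam' : 0 ≤ lam') (hA : 1 ≤ A)
    (hδ : 0 ≤ δ) (hψ : ∀ x, |ψ x| ≤ C * (1 + |x|) ^ lam')
    (hfψ : Integrable ψ f.measure) (hgψ : Integrable ψ g.measure)
    (hf : Integrable (fun x => (1 + |x|) ^ lam') f.measure)
    (hg : Integrable (fun x => (1 + |x|) ^ lam') g.measure)
    (hf1 : f.measure univ ≤ 1) (hg1 : g.measure univ ≤ 1) (happrox : ApproxByStep ψ δ (-A) n A)
    (hclose : ∀ x, |g x - f x| ≤ ε * (1 + |x|) ^ (-lam)) :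
    |∫ x, ψ x ∂g.measure - ∫ x, ψ x ∂f.measure| ≤
      (n * (2 * C * (1 + A) ^ lam') + 4 * C * 2 ^ lam' * (1 - 2 ^ (lam' - lam))⁻¹) * ε + 2 * δ
        + C * (2 ^ lam' + 1) * ∫ x in (Ico (-A) A)ᶜ, (1 + |x|) ^ lam' ∂f.measure := by
  have hC : 0 ≤ C := by simpa using (abs_nonneg _).trans (hψ 0)
  have hM (x : ℝ) (hx : x ∈ Icc (-A) A) : |ψ x| ≤ C * (1 + A) ^ lam' :=
    (hψ x).trans (by gcongr; exact abs_le.2 hx)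
  have hmass (μ : Measure ℝ) (hμ : μ univ ≤ 1) : μ.real (Ico (-A) A) ≤ 1 :=
    ENNReal.toReal_le_of_le_ofReal zero_le_one
      ((measure_mono (subset_univ _)).trans (hμ.trans ENNReal.ofReal_one.ge))
  have hmid := happrox.abs_setIntegral_Ico_sub_le hfψ hgψ hM
    (fun s t => StieltjesFunction.abs_measureReal_Ico_sub_le_two_mul (hlam'.trans hlam.le) hclose)
    le_rfl
  have hgtail := mul_le_mul_of_nonneg_left
    (StieltjesFunction.setIntegral_compl_Ico_le hlam hlam' hA hclose hf) hC
  rw [← integral_add_compl measurableSet_Ico hgψ, ← integral_add_compl measurableSet_Ico hfψ]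
  calc _ = |(∫ x in Ico (-A) A, ψ x ∂g.measure - ∫ x in Ico (-A) A, ψ x ∂f.measure) +
        ∫ x in (Ico (-A) A)ᶜ, ψ x ∂g.measure - ∫ x in (Ico (-A) A)ᶜ, ψ x ∂f.measure| := by
        congr 1; ring
    _ ≤ |∫ x in Ico (-A) A, ψ x ∂g.measure - ∫ x in Ico (-A) A, ψ x ∂f.measure| +
        |∫ x in (Ico (-A) A)ᶜ, ψ x ∂g.measure| + |∫ x in (Ico (-A) A)ᶜ, ψ x ∂f.measure| :=
        (abs_sub _ _).trans (add_le_add (abs_add_le _ _) le_rfl)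
    _ ≤ n * (C * (1 + A) ^ lam' * (2 * ε)) + δ * 2 + C * (2 ^ lam' *
        ∫ x in (Ico (-A) A)ᶜ, (1 + |x|) ^ lam' ∂f.measure
          + 4 * 2 ^ lam' * ε * (1 - 2 ^ (lam' - lam))⁻¹)
        + C * ∫ x in (Ico (-A) A)ᶜ, (1 + |x|) ^ lam' ∂f.measure := by
        have := mul_le_mul_of_nonneg_left (add_le_add (hmass _ hg1) (hmass _ hf1)) hδ
        linarith [abs_setIntegral_le_mul_setIntegral hg hψ (Ico (-A) A)ᶜ,
          abs_setIntegral_le_mul_setIntegral hf hψ (Ico (-A) A)ᶜ]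
    _ = _ := by ring

/-- **Weighted Helly–Bray lemma.**
Let `λ > λ' ≥ 0` and `φ_μ(x) = (1+|x|)^μ`. Let `ψ` be a càdlàg function with
`sup_x |ψ(x)| (1+|x|)^{-λ'} < ∞`. Let `f, f₁, f₂, …` be nondecreasing càdlàg
functions (Stieltjes functions) with total variation bounded by `1`, such that
`sup_x |(fₙ - f)(x)| (1+|x|)^λ → 0`, and such that `∫ (1+|x|)^{λ'} df < ∞` and
`∫ (1+|x|)^{λ'} dfₙ < ∞` for all `n`. Then `∫ ψ df` and `∫ ψ dfₙ` exist and
`∫ ψ dfₙ → ∫ ψ df`. -/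
theorem weighted_helly_bray
    (lam lam' : ℝ) (hlam : lam' < lam) (hlam' : 0 ≤ lam')
    (ψ : ℝ → ℝ)
    (hψ_rc : ∀ x : ℝ, ContinuousWithinAt ψ (Set.Ici x) x)
    (hψ_ll : ∀ x : ℝ, ∃ l : ℝ, Tendsto ψ (nhdsWithin x (Set.Iio x)) (nhds l))
    (C : ℝ) (hψC : ∀ x : ℝ, |ψ x| * (1 + |x|) ^ (-lam') ≤ C)
    (f : StieltjesFunction ℝ) (fs : ℕ → StieltjesFunction ℝ)
    (hf1 : f.measure Set.univ ≤ 1) (hfs1 : ∀ n, (fs n).measure Set.univ ≤ 1)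
    (hconv : ∀ ε > (0 : ℝ), ∃ N : ℕ, ∀ n ≥ N, ∀ x : ℝ,
      |fs n x - f x| * (1 + |x|) ^ lam ≤ ε)
    (hfint : Integrable (fun x => (1 + |x|) ^ lam') f.measure)
    (hfsint : ∀ n, Integrable (fun x => (1 + |x|) ^ lam') (fs n).measure) :
    Integrable ψ f.measure ∧ (∀ n, Integrable ψ (fs n).measure) ∧
      Tendsto (fun n => ∫ x, ψ x ∂(fs n).measure) atTop (nhds (∫ x, ψ x ∂f.measure)) := by
  have hψ (x : ℝ) : |ψ x| ≤ C * (1 + |x|) ^ lam' := by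
    simpa using mul_one_add_abs_rpow_le_iff.1 (hψC x)
  have hint {μ : Measure ℝ} (h : Integrable (fun x => (1 + |x|) ^ lam') μ) : Integrable ψ μ :=
    (h.const_mul C).mono' (measurable_of_continuousWithinAt_Ici hψ_rc).aestronglyMeasurable
      (ae_of_all _ hψ)
  refine ⟨hint hfint, fun n => hint (hfsint n), Metric.tendsto_atTop.2 fun δ hδ => ?_⟩
  obtain ⟨A, hA, hAδ⟩ : ∃ A, 1 ≤ A ∧
      C * (2 ^ lam' + 1) * ∫ x in (Ico (-A) A)ᶜ, (1 + |x|) ^ lam' ∂f.measure < δ / 2 := by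
    have := (tendsto_setIntegral_compl_Ico_atTop hfint).const_mul (C * (2 ^ lam' + 1))
    rw [mul_zero] at this
    exact ((eventually_ge_atTop 1).and (this.eventually (gt_mem_nhds (half_pos hδ)))).exists
  obtain ⟨k, hk⟩ := exists_approxByStep hψ_rc hψ_ll (by positivity : 0 < δ / 8)
    (by linarith : -A ≤ A)
  obtain ⟨ε, hε, hεδ⟩ := exists_pos_mul_lt (by positivity : 0 < δ / 4)
    (k * (2 * C * (1 + A) ^ lam') + 4 * C * 2 ^ lam' * (1 - 2 ^ (lam' - lam))⁻¹)
  obtain ⟨N, hN⟩ := hconv ε hε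
  refine ⟨N, fun n hn => ?_⟩
  have := abs_integral_sub_le_of_approxByStep hlam hlam' hA (by positivity) hψ (hint hfint)
    (hint (hfsint n)) hfint (hfsint n) hf1 (hfs1 n) hk
    fun x => mul_one_add_abs_rpow_le_iff.1 (hN n hn x)
  rw [Real.dist_eq]
  linarith
end

section
/- Let λ > λ' ≥ 0 and φ_μ(x) := (1+|x|)^μ. Suppose f, f₁, f₂, … are nondecreasing càdlàg functions with variation bounded by 1, sup_x |(f_n − f)(x)| φ_λ(x) → 0, ∫ φ_{λ'} df < ∞, and ∫ φ_{λ'} df_n < ∞ for all n. Then sup_{n∈ℕ} ∫ φ_{λ'}(x) df_n(x) < ∞. -/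
/-!
Once `|fₙ - f| ≤ (1 + |x|)^(-λ)`, the mass that `dfₙ` puts on `{|x| > r}` exceeds the mass that
`df` puts on `{|x| ≥ r}` by at most `2 (1 + r)^(-λ)`, since both masses are read off the values of
`fₙ` and `f` at `±r` and at `±∞`. In the layer-cake formula `∫ φ_λ' dfₙ = ∫₀^∞ dfₙ{φ_λ' > t} dt`
the level `t ≥ 1` corresponds to `r = t^(1/λ') - 1`, so `∫ φ_λ' dfₙ` is at most
`dfₙ(ℝ) + ∫ φ_λ' df + 2 ∫₁^∞ t^(-λ/λ') dt`, which is finite because `λ > λ'`.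
-/

open MeasureTheory Filter Set Topology

namespace StieltjesFunction

variable (f g : StieltjesFunction ℝ)

theorem measure_Iic_le_add_of_tendsto_sub_atBot
    (h : Tendsto (fun x => g x - f x) atBot (𝓝 0)) (b : ℝ) :
    g.measure (Iic b) ≤ f.measure (Iic b) + ENNReal.ofReal (g b - f b) := by
  have hIoc : Tendsto (fun a => g.measure (Ioc a b)) atBot (𝓝 (g.measure (Iic b))) := by
    have := tendsto_measure_iUnion_atBot (μ := g.measure) (s := fun a => Ioc a b)
      fun _ _ h => Ioc_subset_Ioc_left h
    rwa [iUnion_Ioc_left] at this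
  have hrhs : Tendsto (fun a => f.measure (Iic b) + ENNReal.ofReal (g b - f b - (g a - f a)))
      atBot (𝓝 (f.measure (Iic b) + ENNReal.ofReal (g b - f b))) := by
    simpa using tendsto_const_nhds.add (ENNReal.tendsto_ofReal (tendsto_const_nhds.sub h))
  refine le_of_tendsto_of_tendsto' hIoc hrhs fun a => ?_
  calc g.measure (Ioc a b) = ENNReal.ofReal ((f b - f a) + (g b - f b - (g a - f a))) := by
        rw [measure_Ioc]; ring_nf
    _ ≤ f.measure (Ioc a b) + ENNReal.ofReal (g b - f b - (g a - f a)) := by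
        rw [measure_Ioc]; exact ENNReal.ofReal_add_le
    _ ≤ _ := by gcongr; exact Ioc_subset_Iic_self

theorem measure_Ioi_le_add_of_tendsto_sub_atTop
    (h : Tendsto (fun x => g x - f x) atTop (𝓝 0)) (a : ℝ) :
    g.measure (Ioi a) ≤ f.measure (Ioi a) + ENNReal.ofReal (f a - g a) := by
  have hIoc : Tendsto (fun b => g.measure (Ioc a b)) atTop (𝓝 (g.measure (Ioi a))) := by
    have := tendsto_measure_iUnion_atTop (μ := g.measure) (s := fun b => Ioc a b)
      fun _ _ h => Ioc_subset_Ioc_right h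
    rwa [iUnion_Ioc_right] at this
  have hrhs : Tendsto (fun b => f.measure (Ioi a) + ENNReal.ofReal (g b - f b - (g a - f a)))
      atTop (𝓝 (f.measure (Ioi a) + ENNReal.ofReal (f a - g a))) := by
    have := (tendsto_const_nhds (x := f.measure (Ioi a))).add
      (ENNReal.tendsto_ofReal (h.sub (tendsto_const_nhds (x := g a - f a))))
    simpa using this
  refine le_of_tendsto_of_tendsto' hIoc hrhs fun b => ?_
  calc g.measure (Ioc a b) = ENNReal.ofReal ((f b - f a) + (g b - f b - (g a - f a))) := by
        rw [measure_Ioc]; ring_nf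
    _ ≤ f.measure (Ioc a b) + ENNReal.ofReal (g b - f b - (g a - f a)) := by
        rw [measure_Ioc]; exact ENNReal.ofReal_add_le
    _ ≤ _ := by gcongr; exact Ioc_subset_Ioi_self

theorem measure_lt_abs_le_add (h : Tendsto (fun x => g x - f x) (cocompact ℝ) (𝓝 0))
    {r δ : ℝ} (hr : 0 ≤ r) (hneg : |g (-r) - f (-r)| ≤ δ) (hpos : |g r - f r| ≤ δ) :
    g.measure {x | r < |x|} ≤ f.measure {x | r ≤ |x|} + 2 * ENNReal.ofReal δ := by
  have hsub : {x : ℝ | r < |x|} ⊆ Iic (-r) ∪ Ioi r := fun x (hx : r < |x|) => by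
    rcases lt_abs.mp hx with h | h
    · exact Or.inr h
    · exact Or.inl (show x ≤ -r by linarith)
  have hsup : Iic (-r) ∪ Ioi r ⊆ {x : ℝ | r ≤ |x|} := by
    rintro x ((hx : x ≤ -r) | (hx : r < x))
    · exact le_abs.mpr (Or.inr (show r ≤ -x by linarith))
    · exact le_abs.mpr (Or.inl hx.le)
  calc g.measure {x | r < |x|}
      ≤ g.measure (Iic (-r)) + g.measure (Ioi r) :=
        (measure_mono hsub).trans (measure_union_le _ _)
    _ ≤ (f.measure (Iic (-r)) + ENNReal.ofReal δ) + (f.measure (Ioi r) + ENNReal.ofReal δ) := by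
        gcongr
        · refine (measure_Iic_le_add_of_tendsto_sub_atBot f g
            (h.mono_left atBot_le_cocompact) _).trans ?_
          gcongr; exact (le_abs_self _).trans hneg
        · refine (measure_Ioi_le_add_of_tendsto_sub_atTop f g
            (h.mono_left atTop_le_cocompact) _).trans ?_
          gcongr; linarith [neg_le_abs (g r - f r)]
    _ = f.measure (Iic (-r) ∪ Ioi r) + 2 * ENNReal.ofReal δ := by
        rw [measure_union (Iic_disjoint_Ioi (by linarith)) _root_.measurableSet_Ioi]; ring
    _ ≤ f.measure {x | r ≤ |x|} + 2 * ENNReal.ofReal δ := by gcongr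

variable {f g} {lam lam' : ℝ}

theorem tendsto_sub_cocompact_of_abs_sub_le (hlam : 0 < lam)
    (hd : ∀ x, |g x - f x| ≤ (1 + |x|) ^ (-lam)) :
    Tendsto (fun x => g x - f x) (cocompact ℝ) (𝓝 0) := by
  have habs : Tendsto (fun x : ℝ => |x|) (cocompact ℝ) atTop := by
    rw [cocompact_eq_atBot_atTop, ← comap_abs_atTop]
    exact tendsto_comap
  exact squeeze_zero_norm hd
    ((tendsto_rpow_neg_atTop hlam).comp (tendsto_atTop_add_const_left _ 1 habs))

theorem measure_lt_one_add_abs_rpow_le (hlam : 0 < lam) (hlam' : 0 < lam')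
    (hd : ∀ x, |g x - f x| ≤ (1 + |x|) ^ (-lam)) {t : ℝ} (ht : 1 ≤ t) :
    g.measure {x | t < (1 + |x|) ^ lam'} ≤
      f.measure {x | t ≤ (1 + |x|) ^ lam'} + 2 * ENNReal.ofReal (t ^ (-lam / lam')) := by
  set r := t ^ lam'⁻¹ - 1 with hr
  have hr0 : 0 ≤ r := by
    have := Real.one_le_rpow ht (inv_nonneg.mpr hlam'.le); linarith
  have ht0 : 0 ≤ t := by linarith
  have hlt : {x : ℝ | t < (1 + |x|) ^ lam'} = {x | r < |x|} := by
    ext x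
    change t < _ ↔ t ^ lam'⁻¹ - 1 < |x|
    rw [← Real.rpow_inv_lt_iff_of_pos ht0 (by positivity : 0 ≤ 1 + |x|) hlam']
    constructor <;> intro h <;> linarith
  have hle : {x : ℝ | t ≤ (1 + |x|) ^ lam'} = {x | r ≤ |x|} := by
    ext x
    change t ≤ _ ↔ t ^ lam'⁻¹ - 1 ≤ |x|
    rw [← Real.rpow_inv_le_iff_of_pos ht0 (by positivity : 0 ≤ 1 + |x|) hlam']
    constructor <;> intro h <;> linarith
  have hδ : ∀ y, |y| = r → |g y - f y| ≤ t ^ (-lam / lam') := fun y hy => by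
    have : (1 + |y|) ^ (-lam) = t ^ (-lam / lam') := by
      rw [hy, hr, add_sub_cancel, ← Real.rpow_mul (by positivity)]; ring_nf
    exact this ▸ hd y
  rw [hlt, hle]
  exact measure_lt_abs_le_add f g (tendsto_sub_cocompact_of_abs_sub_le hlam hd) hr0
    (hδ _ (by rw [abs_neg, abs_of_nonneg hr0])) (hδ _ (abs_of_nonneg hr0))

theorem lintegral_one_add_abs_rpow_le (hlam : 0 < lam) (hlam' : 0 < lam')
    (hd : ∀ x, |g x - f x| ≤ (1 + |x|) ^ (-lam)) :
    ∫⁻ x, ENNReal.ofReal ((1 + |x|) ^ lam') ∂g.measure ≤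
      g.measure univ + ∫⁻ x, ENNReal.ofReal ((1 + |x|) ^ lam') ∂f.measure +
        2 * ∫⁻ t in Ioi 1, ENNReal.ofReal (t ^ (-lam / lam')) := by
  have hφ : Measurable fun x : ℝ => (1 + |x|) ^ lam' :=
    ((continuous_const.add continuous_abs).rpow_const fun _ => Or.inr hlam'.le).measurable
  have hφ_nn : 0 ≤ fun x : ℝ => (1 + |x|) ^ lam' := fun x => by positivity
  have hF : Measurable fun t : ℝ => f.measure {x | t ≤ (1 + |x|) ^ lam'} :=
    (Antitone.measurable fun _ _ hst => measure_mono fun _ hx => hst.trans hx)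
  rw [lintegral_eq_lintegral_meas_lt g.measure (ae_of_all _ hφ_nn) hφ.aemeasurable,
    ← Ioc_union_Ioi_eq_Ioi zero_le_one,
    lintegral_union _root_.measurableSet_Ioi Ioc_disjoint_Ioi_same,
    lintegral_eq_lintegral_meas_le f.measure (ae_of_all _ hφ_nn) hφ.aemeasurable, add_assoc]
  gcongr ?_ + ?_
  · calc ∫⁻ t in Ioc 0 1, g.measure {x | t < (1 + |x|) ^ lam'}
        ≤ ∫⁻ _ in Ioc (0 : ℝ) 1, g.measure univ :=
          lintegral_mono fun _ => measure_mono (subset_univ _)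
      _ = g.measure univ := by simp
  · calc ∫⁻ t in Ioi 1, g.measure {x | t < (1 + |x|) ^ lam'}
        ≤ ∫⁻ t in Ioi 1, (f.measure {x | t ≤ (1 + |x|) ^ lam'} +
            2 * ENNReal.ofReal (t ^ (-lam / lam'))) :=
          setLIntegral_mono' _root_.measurableSet_Ioi fun t ht =>
            measure_lt_one_add_abs_rpow_le hlam hlam' hd (le_of_lt ht)
      _ = (∫⁻ t in Ioi 1, f.measure {x | t ≤ (1 + |x|) ^ lam'}) +
            2 * ∫⁻ t in Ioi 1, ENNReal.ofReal (t ^ (-lam / lam')) := by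
          rw [lintegral_add_left hF, lintegral_const_mul' 2 _ ENNReal.ofNat_ne_top]
      _ ≤ _ := by gcongr; exact zero_le_one

end StieltjesFunction

theorem uniform_bound_weighted_moments_general
    (lam lam' : ℝ) (hlam : lam' < lam) (hlam' : 0 ≤ lam')
    (f : StieltjesFunction ℝ) (fs : ℕ → StieltjesFunction ℝ)
    (hfs1 : ∀ n, (fs n).measure Set.univ ≤ 1)
    (hconv : ∀ ε > (0 : ℝ), ∃ N : ℕ, ∀ n ≥ N, ∀ x : ℝ,
      |fs n x - f x| * (1 + |x|) ^ lam ≤ ε)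
    (hfint : Integrable (fun x => (1 + |x|) ^ lam') f.measure) :
    ∃ M : ℝ, ∀ n : ℕ, (∫ x, (1 + |x|) ^ lam' ∂(fs n).measure) ≤ M := by
  rcases hlam'.eq_or_lt with rfl | hlam'_pos
  · refine ⟨1, fun n => ?_⟩
    simpa [measureReal_def] using ENNReal.toReal_mono ENNReal.one_ne_top (hfs1 n)
  obtain ⟨N, hN⟩ := hconv 1 one_pos
  set K := 1 + ∫⁻ x, ENNReal.ofReal ((1 + |x|) ^ lam') ∂f.measure +
    2 * ∫⁻ t in Ioi 1, ENNReal.ofReal (t ^ (-lam / lam')) with hK_def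
  have hK : K ≠ ⊤ := by
    have hexp : -lam / lam' < -1 := by rw [div_lt_iff₀ hlam'_pos]; linarith
    have := (integrableOn_Ioi_rpow_of_lt hexp one_pos).lintegral_lt_top
    have := hfint.lintegral_lt_top
    finiteness
  have hbound : ∀ n ≥ N, ∫ x, (1 + |x|) ^ lam' ∂(fs n).measure ≤ K.toReal := fun n hn => by
    have hd : ∀ x, |fs n x - f x| ≤ (1 + |x|) ^ (-lam) := fun x => by
      rw [Real.rpow_neg (by positivity), ← one_div, le_div_iff₀ (by positivity)]
      exact hN n hn x
    rw [integral_eq_lintegral_of_nonneg_ae (ae_of_all _ fun x => by positivity) (by fun_prop)]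
    refine ENNReal.toReal_mono hK ((StieltjesFunction.lintegral_one_add_abs_rpow_le
      (hlam'_pos.trans hlam) hlam'_pos hd).trans ?_)
    rw [hK_def]
    gcongr
    exact hfs1 n
  obtain ⟨M, hM⟩ :=
    (isBoundedUnder_of_eventually_le (eventually_atTop.2 ⟨N, hbound⟩)).bddAbove_range
  exact ⟨M, fun n => hM ⟨n, rfl⟩⟩

/-- **Uniform boundedness of weighted moments** (from the proof of the weighted
Helly–Bray lemma). Let `λ > λ' ≥ 0` and `φ_μ(x) = (1+|x|)^μ`. If `f, f₁, f₂, …` are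
nondecreasing càdlàg functions (Stieltjes functions) with variation bounded by `1`,
`sup_x |(fₙ - f)(x)| (1+|x|)^λ → 0`, `∫ (1+|x|)^{λ'} df < ∞` and
`∫ (1+|x|)^{λ'} dfₙ < ∞` for all `n`, then `sup_n ∫ (1+|x|)^{λ'} dfₙ < ∞`. -/
theorem uniform_bound_weighted_moments
    (lam lam' : ℝ) (hlam : lam' < lam) (hlam' : 0 ≤ lam')
    (f : StieltjesFunction ℝ) (fs : ℕ → StieltjesFunction ℝ)
    (hf1 : f.measure Set.univ ≤ 1) (hfs1 : ∀ n, (fs n).measure Set.univ ≤ 1)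
    (hconv : ∀ ε > (0 : ℝ), ∃ N : ℕ, ∀ n ≥ N, ∀ x : ℝ,
      |fs n x - f x| * (1 + |x|) ^ lam ≤ ε)
    (hfint : Integrable (fun x => (1 + |x|) ^ lam') f.measure)
    (hfsint : ∀ n, Integrable (fun x => (1 + |x|) ^ lam') (fs n).measure) :
    ∃ M : ℝ, ∀ n : ℕ, (∫ x, (1 + |x|) ^ lam' ∂(fs n).measure) ≤ M :=
  uniform_bound_weighted_moments_general lam lam' hlam hlam' f fs hfs1 hconv hfint
end

section
/- Let λ ≥ 0, let D_λ be the space of càdlàg functions ψ on ℝ with sup_x |ψ(x)|(1+|x|)^λ < ∞, equipped with the σ-algebra D_λ generated by the coordinate projections π_x(ψ) = ψ(x). Let g : ℝ² → ℝ be measurable, F a distribution function, and W a measurable map from a measurable space (Ω̃, F̃) to (D_λ, D_λ) such that for every ω̃ the function W(ω̃) + F is a nonnegative nondecreasing càdlàg function for which the double integral U(W(ω̃)+F) := ∫∫ g(x₁,x₂) d(W(ω̃)+F)(x₁) d(W(ω̃)+F)(x₂) exists. Then the map ω̃ ↦ U(W(ω̃)+F) is measurable from (Ω̃, F̃) to (ℝ,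 B(ℝ)). -/
/-!
The measure `μ ω` of the Stieltjes function `W ω + F` gives `(a, b]` the mass
`(W ω b + F b) - (W ω a + F a)`, measurable in `ω`. On bounded intervals `μ ω` is finite, so a
π-λ argument makes its restrictions measurable into the Giry σ-algebra, and exhausting `ℝ` makes
`ω ↦ μ ω` measurable. Exhausting `ℝ²` by compacts likewise reduces `ω ↦ μ ω ⊗ μ ω` to products
of finite measures, which are measurable. Finally `∫ g` is the difference of the lower integrals
of `g⁺` and `g⁻`, and lower integrals are measurable functions of the measure.
-/

open MeasureTheory Set

noncomputable def stieltjesOf (f : ℝ → ℝ) (hf : Monotone f)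
    (hc : ∀ x, ContinuousWithinAt f (Set.Ici x) x) : StieltjesFunction ℝ :=
  ⟨f, hf, hc⟩

namespace MeasureTheory

variable {Ω α β : Type*} [MeasurableSpace Ω] [MeasurableSpace α] [MeasurableSpace β]

theorem Measurable.measure_restrict {μ : Ω → Measure α} (hμ : Measurable μ) {s : Set α}
    (hs : MeasurableSet s) : Measurable fun ω => (μ ω).restrict s :=
  Measure.measurable_of_measurable_coe _ fun t ht => by
    simp_rw [Measure.restrict_apply ht]
    exact (Measure.measurable_coe (ht.inter hs)).comp hμ

theorem Measurable.measure_of_measurable_restrict {μ : Ω → Measure α} {A : ℕ → Set α}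
    (hA : Monotone A) (hcover : ⋃ n, A n = univ)
    (h : ∀ n, Measurable fun ω => (μ ω).restrict (A n)) : Measurable μ :=
  Measure.measurable_of_measurable_coe _ fun s hs => by
    have hsup : ∀ ω, μ ω s = ⨆ n, (μ ω).restrict (A n) s := fun ω => by
      rw [← Measure.restrict_iUnion_apply_eq_iSup hA.directed_le hs, hcover, Measure.restrict_univ]
    simp_rw [hsup]
    exact .iSup fun n => (Measure.measurable_coe hs).comp (h n)

theorem Measurable.measure_prod_of_isFiniteMeasure {μ : Ω → Measure α} {ν : Ω → Measure β}
    [∀ ω, IsFiniteMeasure (μ ω)] [∀ ω, IsFiniteMeasure (ν ω)]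
    (hμ : Measurable μ) (hν : Measurable ν) : Measurable fun ω => (μ ω).prod (ν ω) := by
  have hμ' : Measurable fun ω => (⟨μ ω, inferInstance⟩ : FiniteMeasure α) := hμ.subtype_mk
  have hν' : Measurable fun ω => (⟨ν ω, inferInstance⟩ : FiniteMeasure β) := hν.subtype_mk
  exact FiniteMeasure.measurable_fun_prod.comp (hμ'.prodMk hν')

theorem Measurable.measure_prod [TopologicalSpace α] [SigmaCompactSpace α] [T2Space α]
    [OpensMeasurableSpace α] [TopologicalSpace β] [SigmaCompactSpace β] [T2Space β]
    [OpensMeasurableSpace β] {μ : Ω → Measure α} {ν : Ω → Measure β}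
    [∀ ω, IsFiniteMeasureOnCompacts (μ ω)] [∀ ω, IsFiniteMeasureOnCompacts (ν ω)]
    (hμ : Measurable μ) (hν : Measurable ν) : Measurable fun ω => (μ ω).prod (ν ω) := by
  have hK := compactCovering_subset α
  have hL := compactCovering_subset β
  refine .measure_of_measurable_restrict (A := fun n => compactCovering α n ×ˢ compactCovering β n)
    (fun m n hmn => prod_mono (hK hmn) (hL hmn))
    (by rw [iUnion_prod_of_monotone hK hL, iUnion_compactCovering, iUnion_compactCovering,
      univ_prod_univ]) fun n => ?_
  have hKn := isCompact_compactCovering α n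
  have hLn := isCompact_compactCovering β n
  have : ∀ ω, IsFiniteMeasure ((μ ω).restrict (compactCovering α n)) := fun ω =>
    isFiniteMeasure_restrict.2 (hKn.measure_lt_top.ne)
  have : ∀ ω, IsFiniteMeasure ((ν ω).restrict (compactCovering β n)) := fun ω =>
    isFiniteMeasure_restrict.2 (hLn.measure_lt_top.ne)
  simp_rw [← Measure.prod_restrict]
  exact (hμ.measure_restrict hKn.measurableSet).measure_prod_of_isFiniteMeasure
    (hν.measure_restrict hLn.measurableSet)

theorem Measurable.integral_measure {ν : Ω → Measure α} (hν : Measurable ν) {f : α → ℝ}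
    (hf : Measurable f) (hint : ∀ ω, Integrable f (ν ω)) :
    Measurable fun ω => ∫ x, f x ∂ν ω := by
  simp_rw [fun ω => integral_eq_lintegral_pos_part_sub_lintegral_neg_part (hint ω)]
  exact ((Measure.measurable_lintegral hf.ennreal_ofReal).comp hν).ennreal_toReal.sub
    ((Measure.measurable_lintegral hf.neg.ennreal_ofReal).comp hν).ennreal_toReal

end MeasureTheory

theorem StieltjesFunction.measurable_measure_of_measurable_apply {Ω : Type*} [MeasurableSpace Ω]
    {f : Ω → StieltjesFunction ℝ} (hf : ∀ x, Measurable fun ω => f ω x) :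
    Measurable fun ω => (f ω).measure := by
  refine .measure_of_measurable_restrict (A := fun n : ℕ => Ioc (-(n : ℝ)) n)
    (fun m n hmn => Ioc_subset_Ioc (by simpa using hmn) (by simpa using hmn)) ?_ fun n => ?_
  · refine eq_univ_of_forall fun x => mem_iUnion.2 ?_
    obtain ⟨n, hn⟩ := exists_nat_gt |x|
    exact ⟨n, (abs_lt.1 hn).1, (abs_lt.1 hn).2.le⟩
  have : ∀ ω, IsFiniteMeasure ((f ω).measure.restrict (Ioc (-(n : ℝ)) n)) := fun ω =>
    isFiniteMeasure_restrict.2 (by simp)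
  have hIoc (a b : ℝ) : Measurable fun ω => (f ω).measure (Ioc a b) := by
    simp_rw [StieltjesFunction.measure_Ioc]
    exact ((hf b).sub (hf a)).ennreal_ofReal
  refine .measure_of_isPiSystem (borel_eq_generateFrom_Ioc ℝ) (isPiSystem_Ioc id id) ?_ ?_
  · rintro _ ⟨a, b, -, rfl⟩
    simp_rw [Measure.restrict_apply measurableSet_Ioc, Ioc_inter_Ioc]
    exact hIoc _ _
  · simp_rw [Measure.restrict_apply_univ]
    exact hIoc _ _

theorem V_functional_measurable_general
    {Ω : Type*} [MeasurableSpace Ω]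
    (g : ℝ → ℝ → ℝ) (hg : Measurable (Function.uncurry g))
    (F : ℝ → ℝ) (W : Ω → ℝ → ℝ)
    (hWmeas : ∀ x : ℝ, Measurable fun ω => W ω x)
    (hmono : ∀ ω, Monotone fun x => W ω x + F x)
    (hrc : ∀ ω x, ContinuousWithinAt (fun x => W ω x + F x) (Set.Ici x) x)
    (hint : ∀ ω, Integrable (Function.uncurry g)
      (((stieltjesOf _ (hmono ω) (hrc ω)).measure).prod
        ((stieltjesOf _ (hmono ω) (hrc ω)).measure))) :
    Measurable fun ω => ∫ p : ℝ × ℝ, Function.uncurry g p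
      ∂(((stieltjesOf _ (hmono ω) (hrc ω)).measure).prod
        ((stieltjesOf _ (hmono ω) (hrc ω)).measure)) := by
  have hμ : Measurable fun ω => (stieltjesOf _ (hmono ω) (hrc ω)).measure :=
    StieltjesFunction.measurable_measure_of_measurable_apply fun x => (hWmeas x).add_const (F x)
  exact (hμ.measure_prod hμ).integral_measure hg hint

/-- **Measurability of the V-functional** (final step in the proof of the main
theorem). Let `λ ≥ 0` and let `W` be a map from a measurable space `Ω̃` into the space
`D_λ` of càdlàg functions `ψ` with `sup_x |ψ(x)|(1+|x|)^λ < ∞`, measurable with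
respect to the σ-algebra generated by the coordinate projections, i.e. `ω ↦ W(ω)(x)`
is measurable for each `x`. Suppose that for each `ω` the function `W(ω) + F` is a
nonnegative nondecreasing càdlàg function for which the double integral
`U(W(ω)+F) = ∫∫ g(x₁,x₂) d(W(ω)+F)(x₁) d(W(ω)+F)(x₂)` exists. Then
`ω ↦ U(W(ω)+F)` is measurable. -/
theorem V_functional_measurable
    {Ω : Type*} [MeasurableSpace Ω]
    (lam : ℝ) (hlam : 0 ≤ lam)
    (g : ℝ → ℝ → ℝ) (hg : Measurable (Function.uncurry g))
    (F : ℝ → ℝ) (W : Ω → ℝ → ℝ)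
    (hWD : ∀ ω, ∃ C : ℝ, ∀ x : ℝ, |W ω x| * (1 + |x|) ^ lam ≤ C)
    (hWmeas : ∀ x : ℝ, Measurable fun ω => W ω x)
    (hmono : ∀ ω, Monotone fun x => W ω x + F x)
    (hrc : ∀ ω x, ContinuousWithinAt (fun x => W ω x + F x) (Set.Ici x) x)
    (hnonneg : ∀ ω x, 0 ≤ W ω x + F x)
    (hint : ∀ ω, Integrable (Function.uncurry g)
      (((stieltjesOf _ (hmono ω) (hrc ω)).measure).prod
        ((stieltjesOf _ (hmono ω) (hrc ω)).measure))) :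
    Measurable fun ω => ∫ p : ℝ × ℝ, Function.uncurry g p
      ∂(((stieltjesOf _ (hmono ω) (hrc ω)).measure).prod
        ((stieltjesOf _ (hmono ω) (hrc ω)).measure)) :=
  V_functional_measurable_general g hg F W hWmeas hmono hrc hint
end
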